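/- Let Γ be a countable discrete group, (λ_i)_{i=1}^∞ ⊆ [0,1] with Σ_{i=1}^∞ λ_i = 1, and for each i let a_i and b_i be measure-preserving actions of Γ on probability spaces (Y_i,ν_i) and (Z_i,ρ_i) respectively with a_i ≺ b_i. Then Σ_{i=1}^∞ λ_i a_i ≺ Σ_{i=1}^∞ λ_i b_i, where Σ_{i=1}^∞ λ_i a_i denotes the action of Γ on the disjoint union ⊔_i Y_i equipped with the probability measure Σ_i λ_i ν_i, acting like a_i on Y_i. -/

import Mathlib

open MeasureTheory Filter Topology Set

/-- A measure-preserving action of a group `Γ` on a measure space `(X, μ)`. -/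
structure MPAction (Γ : Type*) [Group Γ] (X : Type*) [MeasurableSpace X]
    (μ : MeasureTheory.Measure X) where
  act : Γ → X → X
  measurePreserving_act : ∀ γ : Γ, MeasureTheory.MeasurePreserving (act γ) μ μ
  act_one : ∀ x, act 1 x = x
  act_mul : ∀ γ δ x, act (γ * δ) x = act γ (act δ x)

namespace MPAction

variable {Γ : Type*} [Group Γ] {X : Type*} [MeasurableSpace X] {μ : Measure X}
  {Y : Type*} [MeasurableSpace Y] {ν : Measure Y}
  {W : Type*} [MeasurableSpace W] {ρ : Measure W}

/-- Weak containment of measure-preserving actions. -/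
def WeaklyContained (a : MPAction Γ X μ) (b : MPAction Γ Y ν) : Prop :=
  ∀ (n : ℕ) (A : Fin n → Set X), (∀ i, MeasurableSet (A i)) →
    ∀ (F : Finset Γ) (ε : ℝ), 0 < ε →
      ∃ B : Fin n → Set Y, (∀ i, MeasurableSet (B i)) ∧
        ∀ γ ∈ F, ∀ i j : Fin n,
          |(μ (a.act γ '' A i ∩ A j)).toReal - (ν (b.act γ '' B i ∩ B j)).toReal| < ε

/-- Weak equivalence of measure-preserving actions. -/
def WeakEquiv (a : MPAction Γ X μ) (b : MPAction Γ Y ν) : Prop :=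
  WeaklyContained a b ∧ WeaklyContained b a

/-- A finite measurable partition of the space. -/
def IsPartition {k : ℕ} (A : Fin k → Set X) : Prop :=
  (∀ i, MeasurableSet (A i)) ∧ Pairwise (Function.onFun Disjoint A) ∧ (⋃ i, A i) = Set.univ

/-- The compact set `C_{n,k}(a) ⊆ [0,1]^{n × k × k}`: the closure of the collection of
matrices of measures `μ(γ_p^a A_q ∩ A_r)` over all measurable `k`-partitions, with respect
to the fixed enumeration `e` of the group. -/
noncomputable def Cnk (e : ℕ → Γ) (a : MPAction Γ X μ) (n k : ℕ) :
    Set ((Fin n × Fin k × Fin k) → ℝ) :=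
  closure { v | ∃ A : Fin k → Set X, IsPartition A ∧
    ∀ (p : Fin n) (q r : Fin k), v (p, q, r) = (μ (a.act (e p.1) '' A q ∩ A r)).toReal }

/-- The metric `d` on weak equivalence classes:
`d(a,b) = Σ_{n,k} 2^{-(n+k)} d_H(C_{n,k}(a), C_{n,k}(b))`. -/
noncomputable def dWE (e : ℕ → Γ) (a : MPAction Γ X μ) (b : MPAction Γ Y ν) : ℝ :=
  ∑' nk : ℕ × ℕ, (2 : ℝ) ^ (-(nk.1 : ℤ) - (nk.2 : ℤ)) *
    Metric.hausdorffDist (Cnk e a nk.1 nk.2) (Cnk e b nk.1 nk.2)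

section Mix

variable {ι : Type*} {Z : ι → Type*} [∀ i, MeasurableSpace (Z i)]

theorem measurable_sigmaMk' (i : ι) : Measurable (@Sigma.mk ι Z i) :=
  measurable_iff_le_map.2 (iInf_le _ i)

theorem measurable_of_sigma {δ : Type*} [MeasurableSpace δ] {f : Sigma Z → δ}
    (hf : ∀ i, Measurable (f ∘ Sigma.mk i)) : Measurable f := by
  intro s hs
  rw [Sigma.instMeasurableSpace, MeasurableSpace.measurableSet_iInf]
  intro i
  exact hf i hs

/-- The measure `Σ_i λ_i ν_i` on the disjoint union `⊔_i Z_i`. -/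
noncomputable def mixMeasure (lam : ι → ℝ) (νs : ∀ i, Measure (Z i)) :
    Measure ((i : ι) × Z i) :=
  Measure.sum fun i => ENNReal.ofReal (lam i) • (νs i).map (Sigma.mk i)

instance mixMeasure.instSFinite [Countable ι] (lam : ι → ℝ) (νs : ∀ i, Measure (Z i))
    [∀ i, SFinite (νs i)] : SFinite (mixMeasure lam νs) := by
  unfold mixMeasure
  infer_instance

/-- The convex combination `Σ_i λ_i a_i` of measure-preserving actions, acting on the
disjoint union `⊔_i Z_i` with the measure `Σ_i λ_i ν_i`. -/
noncomputable def mix [Countable ι] {νs : ∀ i, Measure (Z i)} (lam : ι → ℝ)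
    (a : ∀ i, MPAction Γ (Z i) (νs i)) : MPAction Γ ((i : ι) × Z i) (mixMeasure lam νs) where
  act γ p := ⟨p.1, (a p.1).act γ p.2⟩
  measurePreserving_act γ := by
    have hmeas : Measurable fun p : (i : ι) × Z i => (⟨p.1, (a p.1).act γ p.2⟩ : (i : ι) × Z i) := by
      apply measurable_of_sigma
      intro i
      exact (measurable_sigmaMk' i).comp ((a i).measurePreserving_act γ).measurable
    refine ⟨hmeas, ?_⟩
    refine Measure.ext fun s hs => ?_
    rw [Measure.map_apply hmeas hs]
    rw [mixMeasure, Measure.sum_apply _ (hmeas hs), Measure.sum_apply _ hs]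
    congr 1
    funext i
    rw [Measure.smul_apply, Measure.smul_apply,
      Measure.map_apply (measurable_sigmaMk' i) (hmeas hs),
      Measure.map_apply (measurable_sigmaMk' i) hs]
    congr 1
    have hpre : (Sigma.mk i) ⁻¹'
        ((fun p : (i : ι) × Z i => (⟨p.1, (a p.1).act γ p.2⟩ : (i : ι) × Z i)) ⁻¹' s)
        = ((a i).act γ) ⁻¹' (Sigma.mk i ⁻¹' s) := rfl
    rw [hpre]
    exact ((a i).measurePreserving_act γ).measure_preimage
      ((measurable_sigmaMk' i) hs).nullMeasurableSet
  act_one p := by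
    cases p with
    | mk i x => simp only [(a i).act_one]
  act_mul γ δ p := by
    cases p with
    | mk i x => simp only [(a i).act_mul]

end Mix

/-- The binary convex combination `t a + (1 - t) b` of two actions on `(X, μ)`,
realized on the disjoint union of two copies of `X` carrying measures `tμ` and `(1-t)μ`. -/
noncomputable def convComb (t : ℝ) (a b : MPAction Γ X μ) :
    MPAction Γ ((_ : Fin 2) × X) (mixMeasure ![t, 1 - t] fun _ => μ) :=
  mix (νs := fun _ => μ) ![t, 1 - t] ![a, b]

/-- The trivial action. -/
def trivAction (Γ : Type*) [Group Γ] (Y : Type*) [MeasurableSpace Y] (ν : Measure Y) :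
    MPAction Γ Y ν where
  act _ y := y
  measurePreserving_act _ := MeasurePreserving.id ν
  act_one _ := rfl
  act_mul _ _ _ := rfl

/-- The product of two measure-preserving actions. -/
noncomputable def prodAction [SFinite μ] [SFinite ν] (a : MPAction Γ X μ) (b : MPAction Γ Y ν) :
    MPAction Γ (X × Y) (μ.prod ν) where
  act γ := Prod.map (a.act γ) (b.act γ)
  measurePreserving_act γ := (a.measurePreserving_act γ).prod (b.measurePreserving_act γ)
  act_one p := by simp [Prod.map, a.act_one, b.act_one]
  act_mul γ δ p := by simp [Prod.map, a.act_mul, b.act_mul]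

/-- Stable weak containment: `a ≺_s b` iff `a ≺ ι × b`, where `ι` is the trivial action of `Γ`
on the standard probability space `(X₀, μ₀)`. -/
def StableWeaklyContained {X₀ : Type*} [MeasurableSpace X₀] (μ₀ : Measure X₀) [SFinite μ₀]
    (a : MPAction Γ W ρ) (b : MPAction Γ Y ν) [SFinite ν] : Prop :=
  WeaklyContained a (prodAction (trivAction Γ X₀ μ₀) b)

/-- Stable weak equivalence. -/
def StableWeakEquiv {X₀ : Type*} [MeasurableSpace X₀] (μ₀ : Measure X₀) [SFinite μ₀]
    (a : MPAction Γ W ρ) [SFinite ρ] (b : MPAction Γ Y ν) [SFinite ν] : Prop :=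
  StableWeaklyContained μ₀ a b ∧ StableWeaklyContained μ₀ b a

/-- An action is ergodic if every strictly invariant measurable set is null or conull. -/
def IsErgodicAction (a : MPAction Γ X μ) : Prop :=
  ∀ A : Set X, MeasurableSet A → (∀ γ, a.act γ ⁻¹' A = A) → μ A = 0 ∨ μ Aᶜ = 0

/-- An action is (essentially) free if almost every point has trivial stabilizer. -/
def IsFreeAction (a : MPAction Γ X μ) : Prop :=
  ∀ᵐ x ∂μ, ∀ γ : Γ, γ ≠ 1 → a.act γ x ≠ x

end MPAction

/-!
Only finitely many components of the mixture carry all but a small part of the weight `λ`.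
On each of them apply `a_i ≺ b_i` with a small tolerance, and on the others take empty sets.
The correlations `μ(γA ∩ B)` of a mixture are the `λ`-weighted sums of those of its components,
so they are matched up to the tolerance plus the neglected weight.
-/

theorem abs_tsum_mul_sub_tsum_mul_le {ι : Type*} {w u v : ι → ℝ} (hw0 : ∀ i, 0 ≤ w i)
    (hw : Summable w) (hu : ∀ i, u i ∈ Icc 0 1) (hv : ∀ i, v i ∈ Icc 0 1) (s : Finset ι)
    {δ : ℝ} (hδ0 : 0 ≤ δ) (hδ : ∀ i ∈ s, |u i - v i| ≤ δ) :
    |∑' i, w i * u i - ∑' i, w i * v i| ≤ δ * ∑' i, w i + ∑' i, (↑s : Set ι)ᶜ.indicator w i := by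
  have hsummable : ∀ t : ι → ℝ, (∀ i, t i ∈ Icc 0 1) → Summable fun i => w i * t i :=
    fun t ht => hw.of_norm_bounded fun i => by
      rw [Real.norm_eq_abs, abs_mul, abs_of_nonneg (hw0 i), abs_of_nonneg (ht i).1]
      exact mul_le_of_le_one_right (hw0 i) (ht i).2
  have hbound : ∀ i, ‖w i * u i - w i * v i‖ ≤ δ * w i + (↑s : Set ι)ᶜ.indicator w i := by
    intro i
    rw [Real.norm_eq_abs, ← mul_sub, abs_mul, abs_of_nonneg (hw0 i)]
    by_cases hi : i ∈ s
    · simpa [hi, mul_comm] using mul_le_mul_of_nonneg_left (hδ i hi) (hw0 i)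
    · obtain ⟨hu0, hu1⟩ := hu i
      obtain ⟨hv0, hv1⟩ := hv i
      have : |u i - v i| ≤ 1 := abs_sub_le_iff.2 ⟨by linarith, by linarith⟩
      simp only [mem_compl_iff, Finset.mem_coe, hi, not_false_eq_true, indicator_of_mem]
      nlinarith [hw0 i]
  have hg : Summable fun i => δ * w i + (↑s : Set ι)ᶜ.indicator w i :=
    (hw.mul_left δ).add (hw.indicator _)
  calc |∑' i, w i * u i - ∑' i, w i * v i|
      = ‖∑' i, (w i * u i - w i * v i)‖ := by
        rw [(hsummable u hu).tsum_sub (hsummable v hv), Real.norm_eq_abs]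
    _ ≤ ∑' i, (δ * w i + (↑s : Set ι)ᶜ.indicator w i) := tsum_of_norm_bounded hg.hasSum hbound
    _ = δ * ∑' i, w i + ∑' i, (↑s : Set ι)ᶜ.indicator w i := by
        rw [(hw.mul_left δ).tsum_add (hw.indicator _), tsum_mul_left]

theorem exists_pos_finset_abs_tsum_mul_sub_lt {ι : Type*} {w : ι → ℝ} (hw0 : ∀ i, 0 ≤ w i)
    (hw : Summable w) {ε : ℝ} (hε : 0 < ε) :
    ∃ δ > 0, ∃ s : Finset ι, ∀ u v : ι → ℝ, (∀ i, u i ∈ Icc 0 1) → (∀ i, v i ∈ Icc 0 1) →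
      (∀ i ∈ s, |u i - v i| < δ) → |∑' i, w i * u i - ∑' i, w i * v i| < ε := by
  obtain ⟨s, hs⟩ := (hw.hasSum.eventually (eventually_gt_nhds (by linarith :
    ∑' i, w i - ε / 2 < ∑' i, w i))).exists
  have htail : ∑' i, (↑s : Set ι)ᶜ.indicator w i < ε / 2 := by
    rw [← tsum_subtype]
    linarith [hw.sum_add_tsum_compl (s := s)]
  have hW : 0 ≤ ∑' i, w i := tsum_nonneg hw0
  refine ⟨ε / (2 * (∑' i, w i + 1)), by positivity, s, fun u v hu hv huv => ?_⟩
  have hδW : ε / (2 * (∑' i, w i + 1)) * ∑' i, w i < ε / 2 := by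
    rw [div_mul_eq_mul_div, div_lt_div_iff₀ (by positivity) two_pos]
    nlinarith
  calc _ ≤ _ := abs_tsum_mul_sub_tsum_mul_le hw0 hw hu hv s (by positivity)
          fun i hi => (huv i hi).le
    _ < ε := by linarith

section Sigma

variable {ι : Type*} {Z : ι → Type*} [∀ i, MeasurableSpace (Z i)]

theorem measurableSet_sigma_iff {s : Set ((i : ι) × Z i)} :
    MeasurableSet s ↔ ∀ i, MeasurableSet (Sigma.mk i ⁻¹' s) := by
  rw [Sigma.instMeasurableSpace, MeasurableSpace.measurableSet_iInf]
  rfl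

theorem MeasurableSet.sigma {s : Set ι} {t : ∀ i, Set (Z i)}
    (ht : ∀ i ∈ s, MeasurableSet (t i)) : MeasurableSet (s.sigma t) := by
  refine measurableSet_sigma_iff.2 fun i => ?_
  by_cases hi : i ∈ s
  · simpa only [mk_preimage_sigma hi] using ht i hi
  · simp only [mk_preimage_sigma_eq_empty hi, MeasurableSet.empty]

end Sigma

namespace MPAction

variable {Γ : Type*} [Group Γ] {X : Type*} [MeasurableSpace X] {μ : Measure X}

theorem image_act_eq_preimage (c : MPAction Γ X μ) (γ : Γ) (A : Set X) :
    c.act γ '' A = c.act γ⁻¹ ⁻¹' A := by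
  ext x
  constructor
  · rintro ⟨y, hy, rfl⟩
    simpa [← c.act_mul, c.act_one] using hy
  · intro hx
    exact ⟨c.act γ⁻¹ x, hx, by simp [← c.act_mul, c.act_one]⟩

theorem measurableSet_image_act (c : MPAction Γ X μ) (γ : Γ) {A : Set X}
    (hA : MeasurableSet A) : MeasurableSet (c.act γ '' A) := by
  rw [image_act_eq_preimage]
  exact (c.measurePreserving_act γ⁻¹).measurable hA

section Mix

variable {ι : Type*} {Z : ι → Type*} [∀ i, MeasurableSpace (Z i)]

theorem mixMeasure_real_apply (lam : ι → ℝ) (hlam : ∀ i, 0 ≤ lam i) (νs : ∀ i, Measure (Z i))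
    [∀ i, IsFiniteMeasure (νs i)] {s : Set ((i : ι) × Z i)} (hs : MeasurableSet s) :
    (mixMeasure lam νs).real s = ∑' i, lam i * (νs i).real (Sigma.mk i ⁻¹' s) := by
  have hterm : ∀ i, (ENNReal.ofReal (lam i) • (νs i).map (Sigma.mk i)) s
      = ENNReal.ofReal (lam i) * νs i (Sigma.mk i ⁻¹' s) := fun i => by
    rw [Measure.smul_apply, Measure.map_apply (measurable_sigmaMk' i) hs, smul_eq_mul]
  rw [measureReal_def, mixMeasure, Measure.sum_apply _ hs, tsum_congr hterm,
    ENNReal.tsum_toReal_eq fun i => ENNReal.mul_ne_top ENNReal.ofReal_ne_top (measure_ne_top _ _)]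
  simp only [ENNReal.toReal_mul, ENNReal.toReal_ofReal (hlam _), measureReal_def]

variable [Countable ι] {νs : ∀ i, Measure (Z i)}

theorem mk_preimage_mix_image_act (lam : ι → ℝ) (a : ∀ i, MPAction Γ (Z i) (νs i)) (γ : Γ)
    (i : ι) (A : Set ((i : ι) × Z i)) :
    Sigma.mk i ⁻¹' ((mix lam a).act γ '' A) = (a i).act γ '' (Sigma.mk i ⁻¹' A) := by
  rw [image_act_eq_preimage, image_act_eq_preimage]
  rfl

theorem mixMeasure_real_image_act_inter (lam : ι → ℝ) (hlam : ∀ i, 0 ≤ lam i)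
    [∀ i, IsFiniteMeasure (νs i)] (a : ∀ i, MPAction Γ (Z i) (νs i)) (γ : Γ)
    {A B : Set ((i : ι) × Z i)} (hA : MeasurableSet A) (hB : MeasurableSet B) :
    (mixMeasure lam νs).real ((mix lam a).act γ '' A ∩ B)
      = ∑' i, lam i * (νs i).real ((a i).act γ '' (Sigma.mk i ⁻¹' A) ∩ Sigma.mk i ⁻¹' B) := by
  rw [mixMeasure_real_apply lam hlam νs ((measurableSet_image_act _ γ hA).inter hB)]
  simp only [preimage_inter, mk_preimage_mix_image_act]

end Mix

theorem WeaklyContained.mix {ι : Type*} [Countable ι] {Y Z : ι → Type*}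
    [∀ i, MeasurableSpace (Y i)] [∀ i, MeasurableSpace (Z i)]
    {ν : ∀ i, Measure (Y i)} {ρ : ∀ i, Measure (Z i)}
    [∀ i, IsProbabilityMeasure (ν i)] [∀ i, IsProbabilityMeasure (ρ i)]
    {lam : ι → ℝ} (hlam0 : ∀ i, 0 ≤ lam i) (hlam : Summable lam)
    {a : ∀ i, MPAction Γ (Y i) (ν i)} {b : ∀ i, MPAction Γ (Z i) (ρ i)}
    (h : ∀ i, WeaklyContained (a i) (b i)) : WeaklyContained (mix lam a) (mix lam b) := by
  intro n A hA F ε hε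
  obtain ⟨δ, hδ, s, hs⟩ := exists_pos_finset_abs_tsum_mul_sub_lt hlam0 hlam hε
  choose B hB hBA using fun i =>
    h i n (fun q => Sigma.mk i ⁻¹' A q) (fun q => measurable_sigmaMk' i (hA q)) F δ hδ
  have hB' : ∀ q, MeasurableSet ((s : Set ι).sigma fun i => B i q) :=
    fun q => MeasurableSet.sigma fun i _ => hB i q
  refine ⟨fun q => (s : Set ι).sigma fun i => B i q, hB', fun γ hγ q r => ?_⟩
  simp only [← measureReal_def]
  rw [mixMeasure_real_image_act_inter lam hlam0 a γ (hA q) (hA r),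
    mixMeasure_real_image_act_inter lam hlam0 b γ (hB' q) (hB' r)]
  refine hs _ _ (fun i => ⟨measureReal_nonneg, measureReal_le_one⟩)
    (fun i => ⟨measureReal_nonneg, measureReal_le_one⟩) fun i hi => ?_
  simpa only [mk_preimage_sigma (Finset.mem_coe.2 hi), measureReal_def] using hBA i γ hγ q r

end MPAction

theorem weaklyContained_mix_general
    (Γ : Type) [Group Γ]
    (Y Z : ℕ → Type) [∀ i, MeasurableSpace (Y i)] [∀ i, MeasurableSpace (Z i)]
    (ν : ∀ i, Measure (Y i)) (ρ : ∀ i, Measure (Z i))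
    [∀ i, IsProbabilityMeasure (ν i)] [∀ i, IsProbabilityMeasure (ρ i)]
    (lam : ℕ → ℝ) (hmem : ∀ i, lam i ∈ Set.Icc (0:ℝ) 1) (hsum : ∑' i, lam i = 1)
    (a : ∀ i, MPAction Γ (Y i) (ν i)) (b : ∀ i, MPAction Γ (Z i) (ρ i))
    (h : ∀ i, MPAction.WeaklyContained (a i) (b i)) :
    MPAction.WeaklyContained (MPAction.mix lam a) (MPAction.mix lam b) := by
  have hlam : Summable lam := by
    by_contra hlam
    simp [tsum_eq_zero_of_not_summable hlam] at hsum
  exact MPAction.WeaklyContained.mix (fun i => (hmem i).1) hlam h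

/-- If `λ_i ∈ [0,1]` with `Σ_{i} λ_i = 1` and `a_i ≺ b_i` are weakly
contained measure-preserving actions of a countable group `Γ` on probability spaces
`(Y_i,ν_i)` and `(Z_i,ρ_i)`, then `Σ_i λ_i a_i ≺ Σ_i λ_i b_i`, where `Σ_i λ_i a_i` is the
action on the disjoint union `⊔_i Y_i` with the probability measure `Σ_i λ_i ν_i`, acting
like `a_i` on `Y_i`. -/
theorem weaklyContained_mix
    (Γ : Type) [Group Γ] [Countable Γ]
    (Y Z : ℕ → Type) [∀ i, MeasurableSpace (Y i)] [∀ i, MeasurableSpace (Z i)]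
    (ν : ∀ i, Measure (Y i)) (ρ : ∀ i, Measure (Z i))
    [∀ i, IsProbabilityMeasure (ν i)] [∀ i, IsProbabilityMeasure (ρ i)]
    (lam : ℕ → ℝ) (hmem : ∀ i, lam i ∈ Set.Icc (0:ℝ) 1) (hsum : ∑' i, lam i = 1)
    (a : ∀ i, MPAction Γ (Y i) (ν i)) (b : ∀ i, MPAction Γ (Z i) (ρ i))
    (h : ∀ i, MPAction.WeaklyContained (a i) (b i)) :
    MPAction.WeaklyContained (MPAction.mix lam a) (MPAction.mix lam b) :=
  weaklyContained_mix_general Γ Y Z ν ρ lam hmem hsum a b h
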